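/- arXiv:2212.00433 — 2 statements merged into one kernel-verified Lean document; each statement's English description precedes it below -/
import Mathlib

section
/- Let n, p be positive natural numbers with n ≤ p, and let A ∈ ℝ^{n×p} be a random matrix whose entries are i.i.d. standard Gaussian N(0,1). Then, almost surely, the matrix AAᵀ ∈ ℝ^{n×n} is invertible (equivalently, A has full row rank n). -/
/-! The Gram determinant `det (A Aᵀ)` is a polynomial in the entries of `A`, and it is not the
zero polynomial when `n ≤ p` (it equals `1` at `A = [I | 0]`). The zero set of a nonzero polynomial is
null for any product of atomless measures on `ℝ`: by Fubini and induction on the number of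
variables, almost every fibre is the root set of a nonzero univariate polynomial, hence finite. -/

open MeasureTheory ProbabilityTheory Matrix

theorem Polynomial.ae_eval_ne_zero {R : Type*} [CommRing R] [IsDomain R] [MeasurableSpace R]
    (μ : Measure R) [NullSingletonClass μ] {q : Polynomial R} (hq : q ≠ 0) :
    ∀ᵐ y ∂μ, q.eval y ≠ 0 :=
  (Polynomial.finite_setOfPred_isRoot hq).countable.ae_notMem μ

namespace MvPolynomial

theorem ae_eval_ne_zero_of_fin {k : ℕ} (μ : Fin k → Measure ℝ) [∀ i, SigmaFinite (μ i)]
    [∀ i, NullSingletonClass (μ i)] {P : MvPolynomial (Fin k) ℝ} (hP : P ≠ 0) :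
    ∀ᵐ x ∂Measure.pi μ, eval x P ≠ 0 := by
  induction k with
  | zero =>
    obtain ⟨c, rfl⟩ := C_surjective (Fin 0) P
    exact ae_of_all _ fun x => by simpa using hP
  | succ k ih =>
    -- `Q` is `P` as a polynomial in the first variable with coefficients in the remaining ones.
    set Q := finSuccEquiv ℝ k P
    have hQ : Q ≠ 0 := (EmbeddingLike.map_ne_zero_iff).2 hP
    have hlead : ∀ᵐ s ∂Measure.pi (fun j => μ j.succ), eval s Q.leadingCoeff ≠ 0 :=
      ih _ (Polynomial.leadingCoeff_ne_zero.2 hQ)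
    have hfiber : ∀ᵐ s ∂Measure.pi (fun j => μ j.succ), ∀ᵐ y ∂μ 0,
        eval (Fin.cons y s : Fin (k + 1) → ℝ) P ≠ 0 := by
      filter_upwards [hlead] with s hs
      have hq : Q.map (eval s) ≠ 0 := fun h => hs <| by
        simpa [Polynomial.coeff_map] using congrArg (Polynomial.coeff · Q.natDegree) h
      simpa only [eval_eq_eval_mv_eval'] using Polynomial.ae_eval_ne_zero (μ 0) hq
    have hmeas : MeasurableSet
        {q : ℝ × (Fin k → ℝ) | eval (Fin.cons q.1 q.2 : Fin (k + 1) → ℝ) P ≠ 0} :=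
      (measurableSet_singleton 0).compl.preimage
        ((continuous_eval P).measurable.comp (by fun_prop))
    have hpres := (measurePreserving_piFinSuccAbove μ 0).symm
    rw [← hpres.map_eq, (MeasurableEquiv.measurableEmbedding _).ae_map_iff]
    simp only [MeasurableEquiv.piFinSuccAbove_symm_apply, Fin.insertNthEquiv_zero,
      Fin.succAbove_zero]
    exact (Measure.ae_prod_iff_ae_ae hmeas).2 ((Measure.ae_ae_comm hmeas).2 hfiber)

theorem ae_eval_ne_zero {ι : Type*} [Fintype ι] (μ : ι → Measure ℝ) [∀ i, SigmaFinite (μ i)]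
    [∀ i, NullSingletonClass (μ i)] {P : MvPolynomial ι ℝ} (hP : P ≠ 0) :
    ∀ᵐ x ∂Measure.pi μ, eval x P ≠ 0 := by
  let f := (Fintype.equivFin ι).symm
  rw [← (measurePreserving_piCongrLeft μ f).map_eq,
    (MeasurableEquiv.measurableEmbedding _).ae_map_iff]
  filter_upwards [ae_eval_ne_zero_of_fin (fun i => μ (f i))
    ((rename_injective _ f.symm.injective).ne hP)] with x hx
  rw [eval_rename] at hx
  convert hx using 3
  funext i
  simp [MeasurableEquiv.piCongrLeft, Equiv.piCongrLeft_apply_eq_cast]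

theorem ae_eval_uncurry_ne_zero {m n : Type*} [Fintype m] [Fintype n] (μ : m → n → Measure ℝ)
    [∀ i j, IsProbabilityMeasure (μ i j)] [∀ i j, NullSingletonClass (μ i j)]
    {P : MvPolynomial (m × n) ℝ} (hP : P ≠ 0) :
    ∀ᵐ A ∂Measure.pi (fun i => Measure.pi (μ i)), eval (Function.uncurry A) P ≠ 0 := by
  have hpi : Measure.pi (fun i => Measure.pi (μ i)) =
      (Measure.pi fun q : m × n => μ q.1 q.2).map (MeasurableEquiv.curry m n ℝ) := by
    simp only [← Measure.infinitePi_eq_pi, Measure.infinitePi_map_curry]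
  rw [hpi, (MeasurableEquiv.measurableEmbedding _).ae_map_iff]
  simpa only [MeasurableEquiv.coe_curry, Function.uncurry_curry] using ae_eval_ne_zero _ hP

end MvPolynomial

namespace Matrix

variable (m n R : Type*) [Fintype m] [DecidableEq m] [Fintype n] [CommRing R]

theorem eval_det_mvPolynomialX_mul_transpose (A : m → n → R) :
    MvPolynomial.eval (Function.uncurry A) (mvPolynomialX m n R * (mvPolynomialX m n R)ᵀ).det =
      (of A * (of A)ᵀ).det := by
  rw [RingHom.map_det, RingHom.mapMatrix_apply, Matrix.map_mul, transpose_map]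
  have hX : (mvPolynomialX m n R).map (MvPolynomial.eval (Function.uncurry A)) = of A :=
    mvPolynomialX_map_eval₂ _ A
  rw [hX]

theorem det_mvPolynomialX_mul_transpose_ne_zero [Nontrivial R]
    (h : Fintype.card m ≤ Fintype.card n) :
    (mvPolynomialX m n R * (mvPolynomialX m n R)ᵀ).det ≠ 0 := by
  classical
  obtain ⟨e⟩ := Function.Embedding.nonempty_of_card_le h
  intro h0
  have h1 := eval_det_mvPolynomialX_mul_transpose m n R ((1 : Matrix n n R).submatrix e id)
  rw [h0, map_zero] at h1
  change 0 = ((1 : Matrix n n R).submatrix e id * ((1 : Matrix n n R).submatrix e id)ᵀ).det at h1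
  rw [transpose_submatrix, transpose_one, ← submatrix_mul _ _ _ _ _ Function.bijective_id,
    Matrix.one_mul, submatrix_one_embedding, det_one] at h1
  exact zero_ne_one h1

end Matrix

theorem gaussian_matrix_full_row_rank_general
    (n p : ℕ) (hnp : n ≤ p) :
    ∀ᵐ A ∂(Measure.pi fun _ : Fin n => Measure.pi fun _ : Fin p => gaussianReal 0 1),
      IsUnit (Matrix.of A * (Matrix.of A)ᵀ).det := by
  have : NullSingletonClass (gaussianReal 0 1) := nullSingletonClass_gaussianReal one_ne_zero
  have hdet := det_mvPolynomialX_mul_transpose_ne_zero (Fin n) (Fin p) ℝ (by simpa using hnp)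
  filter_upwards [MvPolynomial.ae_eval_uncurry_ne_zero (fun _ _ => gaussianReal 0 1) hdet]
    with A hA
  rw [eval_det_mvPolynomialX_mul_transpose] at hA
  exact hA.isUnit

/-- If `n ≤ p` and `A ∈ ℝ^{n×p}` has i.i.d. standard Gaussian entries, then
almost surely `AAᵀ` is invertible (equivalently, `A` has full row rank `n`). -/
theorem gaussian_matrix_full_row_rank
    (n p : ℕ) (hn : 0 < n) (hp : 0 < p) (hnp : n ≤ p) :
    ∀ᵐ A ∂(Measure.pi fun _ : Fin n => Measure.pi fun _ : Fin p => gaussianReal 0 1),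
      IsUnit (Matrix.of A * (Matrix.of A)ᵀ).det :=
  gaussian_matrix_full_row_rank_general n p hnp
end

section
/- Let n, p be positive natural numbers, let A ∈ ℝ^{n×p}, let λ > 0, and let a, b ≥ 0 be such that AAᵀ − a² I_n and b² I_n − AAᵀ are both positive semidefinite (i.e., every eigenvalue of AAᵀ lies in [a², b²]). Then for every z ∈ ℝ^n, ‖Aᵀ(AAᵀ + λ I_n)⁻¹ z‖ ≤ (b / (a² + λ)) ‖z‖. -/
open Matrix WithLp

/-!
With `w = (AAᵀ + λI)⁻¹ z`, the upper bound on `AAᵀ` gives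
`‖Aᵀ w‖² = wᵀ AAᵀ w ≤ b² ‖w‖²`, while the lower bound makes `AAᵀ + λI` coercive with
constant `a² + λ`: `(a² + λ) ‖w‖² ≤ ⟪w, z⟫ ≤ ‖w‖ ‖z‖`, so `‖w‖ ≤ ‖z‖ / (a² + λ)`.
-/

theorem EuclideanSpace.sqrt_sum_sq_eq_norm_toLp {ι : Type*} [Fintype ι] (v : ι → ℝ) :
    √(∑ i, v i ^ 2) = ‖toLp 2 v‖ := by
  simp [EuclideanSpace.norm_eq]

theorem EuclideanSpace.norm_toLp_sq_eq_dotProduct {ι : Type*} [Fintype ι] (v : ι → ℝ) :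
    ‖toLp 2 v‖ ^ 2 = v ⬝ᵥ v := by
  rw [← real_inner_self_eq_norm_sq, EuclideanSpace.inner_toLp_toLp, star_trivial]

theorem norm_le_div_of_mul_norm_sq_le_inner {E : Type*} [NormedAddCommGroup E]
    [InnerProductSpace ℝ E] {c : ℝ} (hc : 0 < c) {w z : E}
    (h : c * ‖w‖ ^ 2 ≤ inner ℝ w z) : ‖w‖ ≤ ‖z‖ / c := by
  rw [le_div_iff₀' hc]
  have hcs : c * ‖w‖ * ‖w‖ ≤ ‖w‖ * ‖z‖ := by nlinarith [real_inner_le_norm w z]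
  rcases (norm_nonneg w).eq_or_lt with hw | hw
  · rw [← hw, mul_zero]
    exact norm_nonneg z
  · nlinarith

namespace Matrix

open EuclideanSpace

variable {m n : Type*} [Fintype m] [Fintype n]

theorem dotProduct_transpose_mulVec_self (A : Matrix n m ℝ) (w : n → ℝ) :
    (Aᵀ *ᵥ w) ⬝ᵥ (Aᵀ *ᵥ w) = w ⬝ᵥ ((A * Aᵀ) *ᵥ w) := by
  rw [dotProduct_mulVec, vecMul_transpose, ← mulVec_mulVec, dotProduct_comm]

variable [DecidableEq n]

theorem PosSemidef.mul_dotProduct_self_le {M : Matrix n n ℝ} {c : ℝ}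
    (h : (M - c • 1).PosSemidef) (w : n → ℝ) : c * (w ⬝ᵥ w) ≤ w ⬝ᵥ (M *ᵥ w) := by
  have hnonneg := h.dotProduct_mulVec_nonneg w
  rw [star_trivial, sub_mulVec, dotProduct_sub, smul_mulVec, one_mulVec, dotProduct_smul,
    smul_eq_mul] at hnonneg
  linarith

theorem PosSemidef.dotProduct_mulVec_le {M : Matrix n n ℝ} {c : ℝ}
    (h : (c • 1 - M).PosSemidef) (w : n → ℝ) : w ⬝ᵥ (M *ᵥ w) ≤ c * (w ⬝ᵥ w) := by
  have hnonneg := h.dotProduct_mulVec_nonneg w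
  rw [star_trivial, sub_mulVec, dotProduct_sub, smul_mulVec, one_mulVec, dotProduct_smul,
    smul_eq_mul] at hnonneg
  linarith

theorem norm_toLp_transpose_mulVec_le {A : Matrix n m ℝ} {b : ℝ} (hb : 0 ≤ b)
    (h : (b ^ 2 • 1 - A * Aᵀ).PosSemidef) (w : n → ℝ) :
    ‖toLp 2 (Aᵀ *ᵥ w)‖ ≤ b * ‖toLp 2 w‖ := by
  refine le_of_sq_le_sq ?_ (by positivity)
  rw [mul_pow, norm_toLp_sq_eq_dotProduct, norm_toLp_sq_eq_dotProduct,
    dotProduct_transpose_mulVec_self]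
  exact h.dotProduct_mulVec_le w

theorem norm_toLp_inv_mulVec_le {M : Matrix n n ℝ} {c : ℝ} (hc : 0 < c)
    (h : (M - c • 1).PosSemidef) (z : n → ℝ) :
    ‖toLp 2 (M⁻¹ *ᵥ z)‖ ≤ ‖toLp 2 z‖ / c := by
  have hM : M.PosDef := by
    simpa using PosDef.posSemidef_add h (PosDef.one.smul hc)
  have hMw : M *ᵥ (M⁻¹ *ᵥ z) = z := by
    rw [mulVec_mulVec, mul_nonsing_inv M ((isUnit_iff_isUnit_det M).mp hM.isUnit), one_mulVec]
  refine norm_le_div_of_mul_norm_sq_le_inner hc ?_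
  rw [norm_toLp_sq_eq_dotProduct, inner_toLp_toLp, star_trivial, dotProduct_comm z]
  simpa only [hMw] using h.mul_dotProduct_self_le (M⁻¹ *ᵥ z)

end Matrix

theorem ridge_noise_operator_bound_general
    (n p : ℕ)
    (A : Matrix (Fin n) (Fin p) ℝ) (lam : ℝ) (hlam : 0 < lam)
    (a b : ℝ) (hb : 0 ≤ b)
    (hlower : (A * Aᵀ - a ^ 2 • (1 : Matrix (Fin n) (Fin n) ℝ)).PosSemidef)
    (hupper : (b ^ 2 • (1 : Matrix (Fin n) (Fin n) ℝ) - A * Aᵀ).PosSemidef) :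
    ∀ z : Fin n → ℝ,
      Real.sqrt (∑ j,
          (((Aᵀ * (A * Aᵀ + lam • (1 : Matrix (Fin n) (Fin n) ℝ))⁻¹) *ᵥ z) j) ^ 2) ≤
        (b / (a ^ 2 + lam)) * Real.sqrt (∑ i, (z i) ^ 2) := by
  intro z
  set M := A * Aᵀ + lam • (1 : Matrix (Fin n) (Fin n) ℝ)
  have hM : (M - (a ^ 2 + lam) • 1).PosSemidef := by
    convert hlower using 1
    simp only [M, add_smul]
    abel
  rw [EuclideanSpace.sqrt_sum_sq_eq_norm_toLp,
    EuclideanSpace.sqrt_sum_sq_eq_norm_toLp, ← mulVec_mulVec]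
  calc ‖toLp 2 (Aᵀ *ᵥ (M⁻¹ *ᵥ z))‖
      ≤ b * ‖toLp 2 (M⁻¹ *ᵥ z)‖ := norm_toLp_transpose_mulVec_le hb hupper _
    _ ≤ b * (‖toLp 2 z‖ / (a ^ 2 + lam)) := by
        gcongr
        exact norm_toLp_inv_mulVec_le (by positivity) hM z
    _ = b / (a ^ 2 + lam) * ‖toLp 2 z‖ := by ring

/-- If every eigenvalue of `AAᵀ` lies in `[a², b²]` (i.e. both `AAᵀ − a²Iₙ`
and `b²Iₙ − AAᵀ` are positive semidefinite), then
`‖Aᵀ(AAᵀ + λIₙ)⁻¹ z‖ ≤ (b/(a² + λ)) ‖z‖` for every `z ∈ ℝⁿ`. -/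
theorem ridge_noise_operator_bound
    (n p : ℕ) (hn : 0 < n) (hp : 0 < p)
    (A : Matrix (Fin n) (Fin p) ℝ) (lam : ℝ) (hlam : 0 < lam)
    (a b : ℝ) (ha : 0 ≤ a) (hb : 0 ≤ b)
    (hlower : (A * Aᵀ - a ^ 2 • (1 : Matrix (Fin n) (Fin n) ℝ)).PosSemidef)
    (hupper : (b ^ 2 • (1 : Matrix (Fin n) (Fin n) ℝ) - A * Aᵀ).PosSemidef) :
    ∀ z : Fin n → ℝ,
      Real.sqrt (∑ j,
          (((Aᵀ * (A * Aᵀ + lam • (1 : Matrix (Fin n) (Fin n) ℝ))⁻¹) *ᵥ z) j) ^ 2) ≤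
        (b / (a ^ 2 + lam)) * Real.sqrt (∑ i, (z i) ^ 2) :=
  ridge_noise_operator_bound_general n p A lam hlam a b hb hlower hupper
end
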